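/- arXiv:2507.03714 — 4 statements merged into one kernel-verified Lean document; each statement's English description precedes it below -/
import Mathlib

section
/- Let A = ⊗_{p=0}^{n-1} σ_p with each σ_p in the Sigma basis, let Ā = ⊗_p σ̄_p be its completion (σ̄_p = σ_x if σ_p ∈ {σ₊,σ₋}, else σ̄_p = I₂), and let Aᶜ = Ā - A. Then AᵀAᶜ = 0, i.e., the column spaces of A and Aᶜ are orthogonal. -/
open Matrix
noncomputable section
open scoped Classical
def σp : Matrix (Fin 2) (Fin 2) ℝ := !![0, 1; 0, 0]
def σm : Matrix (Fin 2) (Fin 2) ℝ := !![0, 0; 1, 0]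
def σpm : Matrix (Fin 2) (Fin 2) ℝ := !![1, 0; 0, 0]
def σmp : Matrix (Fin 2) (Fin 2) ℝ := !![0, 0; 0, 1]
def σx : Matrix (Fin 2) (Fin 2) ℝ := !![0, 1; 1, 0]
def SigmaBasis : Set (Matrix (Fin 2) (Fin 2) ℝ) := {1, σp, σm, σpm, σmp}
def bar (σ : Matrix (Fin 2) (Fin 2) ℝ) : Matrix (Fin 2) (Fin 2) ℝ :=
  if σ = σp ∨ σ = σm then σx else 1
def kronN : (n : ℕ) → (Fin n → Matrix (Fin 2) (Fin 2) ℝ) → Matrix (Fin (2 ^ n)) (Fin (2 ^ n)) ℝ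
  | 0, _ => 1
  | n + 1, σ =>
    Matrix.reindex (finProdFinEquiv.trans (finCongr (by ring)))
      (finProdFinEquiv.trans (finCongr (by ring)))
      (Matrix.kroneckerMap (· * ·) (σ 0) (kronN n (fun i => σ i.succ)))

lemma kronN_transpose (n : ℕ) (σ : Fin n → Matrix (Fin 2) (Fin 2) ℝ) :
    (kronN n σ)ᵀ = kronN n (fun p => (σ p)ᵀ) := by
  induction n with
  | zero => simp [kronN]
  | succ n ih =>
    simp only [kronN, transpose_reindex, ← Matrix.kroneckerMap_transpose]
    rw [ih]

lemma kronN_mul (n : ℕ) (σ τ : Fin n → Matrix (Fin 2) (Fin 2) ℝ) :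
    kronN n σ * kronN n τ = kronN n (fun p => σ p * τ p) := by
  induction n with
  | zero => simp [kronN]
  | succ n ih =>
    simp only [kronN, Matrix.reindex_apply]
    rw [Matrix.submatrix_mul_equiv, ← Matrix.mul_kronecker_mul, ih]

lemma entry_ne {A B : Matrix (Fin 2) (Fin 2) ℝ} (i j : Fin 2) (h : A i j ≠ B i j) : A ≠ B :=
  fun hAB => h (by rw [hAB])

lemma bar_one : bar 1 = 1 := by
  rw [bar, if_neg]
  push_neg
  exact ⟨entry_ne 0 0 (by simp [σp]), entry_ne 0 0 (by simp [σm])⟩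

lemma bar_σp : bar σp = σx := by rw [bar, if_pos (Or.inl rfl)]

lemma bar_σm : bar σm = σx := by rw [bar, if_pos (Or.inr rfl)]

lemma bar_σpm : bar σpm = 1 := by
  rw [bar, if_neg]
  push_neg
  exact ⟨entry_ne 0 0 (by norm_num [σpm, σp]), entry_ne 0 0 (by norm_num [σpm, σm])⟩

lemma bar_σmp : bar σmp = 1 := by
  rw [bar, if_neg]
  push_neg
  exact ⟨entry_ne 1 1 (by norm_num [σmp, σp]), entry_ne 1 1 (by norm_num [σmp, σm])⟩

lemma factor_key {σ : Matrix (Fin 2) (Fin 2) ℝ} (h : σ ∈ SigmaBasis) :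
    σᵀ * bar σ = σᵀ * σ := by
  rcases h with h | h | h | h | h <;> subst h
  · rw [bar_one]
  · rw [bar_σp]
    ext i j
    fin_cases i <;> fin_cases j <;>
      simp [σp, σx, Matrix.mul_apply, Fin.sum_univ_two, Matrix.transpose_apply, Matrix.vecHead, Matrix.vecTail]
  · rw [bar_σm]
    ext i j
    fin_cases i <;> fin_cases j <;>
      simp [σm, σx, Matrix.mul_apply, Fin.sum_univ_two, Matrix.transpose_apply, Matrix.vecHead, Matrix.vecTail]
  · rw [bar_σpm]
    ext i j
    fin_cases i <;> fin_cases j <;>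
      simp [σpm, Matrix.mul_apply, Fin.sum_univ_two, Matrix.transpose_apply, Matrix.vecHead, Matrix.vecTail, Matrix.one_apply]
  · rw [bar_σmp]
    ext i j
    fin_cases i <;> fin_cases j <;>
      simp [σmp, Matrix.mul_apply, Fin.sum_univ_two, Matrix.transpose_apply, Matrix.vecHead, Matrix.vecTail, Matrix.one_apply]

theorem transpose_mul_complement_eq_zero (n : ℕ) (σ : Fin n → Matrix (Fin 2) (Fin 2) ℝ)
    (hσ : ∀ p, σ p ∈ SigmaBasis) :
    (kronN n σ)ᵀ * (kronN n (fun p => bar (σ p)) - kronN n σ) = 0 := by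
  rw [Matrix.mul_sub, kronN_transpose, kronN_mul, kronN_mul, sub_eq_zero]
  have : (fun p => (σ p)ᵀ * bar (σ p)) = fun p => (σ p)ᵀ * σ p :=
    funext fun p => factor_key (hσ p)
  rw [this]

end
end

section
/- Let A = ⊗_p σ_p with σ_p in the Sigma basis and let Aᶜ = Ā - A with Ā = ⊗_p σ̄_p the completion. Then the 2^{n+1}×2^{n+1} block matrix U = [[A, Aᶜ],[Aᶜ, A]] is an orthogonal (unitary) matrix. -/
open Matrix

noncomputable section
open scoped Classical

lemma kronN_one (n : ℕ) : kronN n (fun _ => (1 : Matrix (Fin 2) (Fin 2) ℝ)) = 1 := by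
  induction n with
  | zero => simp [kronN]
  | succ n ih =>
    simp only [kronN, reindex_apply, ih, one_kronecker_one, submatrix_one_equiv]

lemma tr_σp : σpᵀ = σm := by ext i j; fin_cases i <;> fin_cases j <;> rfl
lemma tr_σm : σmᵀ = σp := by ext i j; fin_cases i <;> fin_cases j <;> rfl
lemma tr_σpm : σpmᵀ = σpm := by ext i j; fin_cases i <;> fin_cases j <;> rfl
lemma tr_σmp : σmpᵀ = σmp := by ext i j; fin_cases i <;> fin_cases j <;> rfl
lemma tr_σx : σxᵀ = σx := by ext i j; fin_cases i <;> fin_cases j <;> rfl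

lemma base_facts {σ : Matrix (Fin 2) (Fin 2) ℝ} (h : σ ∈ SigmaBasis) :
    σᵀ * bar σ = σᵀ * σ ∧ (bar σ)ᵀ * σ = σᵀ * σ ∧ (bar σ)ᵀ * bar σ = 1 := by
  rcases h with h | h | h | h | h <;> subst h <;>
    refine ⟨?_, ?_, ?_⟩ <;>
      (first | rw [bar_one] | rw [bar_σp] | rw [bar_σm] | rw [bar_σpm] | rw [bar_σmp]) <;>
      simp only [tr_σp, tr_σm, tr_σpm, tr_σmp, tr_σx, transpose_one] <;>
      simp only [σp, σm, σpm, σmp, σx, Matrix.one_fin_two] <;>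
      norm_num [Matrix.mul_fin_two, funext_iff, Fin.forall_fin_two]

theorem completion_block_matrix_orthogonal (n : ℕ) (σ : Fin n → Matrix (Fin 2) (Fin 2) ℝ)
    (hσ : ∀ p, σ p ∈ SigmaBasis) :
    letI A := kronN n σ
    letI Ac := kronN n (fun p => bar (σ p)) - A
    (Matrix.fromBlocks A Ac Ac A)ᵀ * Matrix.fromBlocks A Ac Ac A = 1 := by
  set A := kronN n σ with hA
  set B := kronN n (fun p => bar (σ p)) with hB
  set Ac := B - A with hAc
  have hAB : Aᵀ * B = Aᵀ * A := by
    rw [kronN_transpose, kronN_mul, kronN_mul]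
    exact congrArg _ (funext fun p => (base_facts (hσ p)).1)
  have hBA : Bᵀ * A = Aᵀ * A := by
    rw [kronN_transpose, kronN_mul, kronN_transpose, kronN_mul]
    exact congrArg _ (funext fun p => (base_facts (hσ p)).2.1)
  have hBB : Bᵀ * B = 1 := by
    rw [kronN_transpose, kronN_mul]
    rw [show (fun p => (bar (σ p))ᵀ * bar (σ p)) = fun _ => (1 : Matrix (Fin 2) (Fin 2) ℝ) from
      funext fun p => (base_facts (hσ p)).2.2]
    exact kronN_one n
  have h1 : Aᵀ * A + Acᵀ * Ac = 1 := by
    simp only [hAc, transpose_sub, sub_mul, mul_sub, hAB, hBA, hBB]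
    abel
  have h2 : Aᵀ * Ac + Acᵀ * A = 0 := by
    simp only [hAc, transpose_sub, sub_mul, mul_sub, hAB, hBA]
    abel
  rw [fromBlocks_transpose, fromBlocks_multiply, ← fromBlocks_one]
  congr 1 <;> simp only [← h1, ← h2] <;> abel

end
end

section
/- The n×n tridiagonal matrix A_e with 2 on the diagonal and -1 on the super- and sub-diagonals, for n = 2^s, satisfies the recursion A^(s) = I₂ ⊗ A^(s-1) + σ₋ ⊗ D^(s-1) + σ₊ ⊗ (D^(s-1))ᵀ, where D^(s-1) = -σ₊ ⊗ ... ⊗ σ₊ ((s-1)-fold Kronecker power of σ₊, negated) and A^(1) = 2I₂ - σ₋ - σ₊. Consequently A_e admits a Sigma-basis decomposition with 2s+1 = 2 log₂ n + 1 terms. -/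
open Matrix

noncomputable section
open scoped Classical

/-- Kronecker product of a 2×2 matrix with a 2^s×2^s matrix. -/
def kronL (s : ℕ) (M : Matrix (Fin 2) (Fin 2) ℝ)
    (N : Matrix (Fin (2 ^ s)) (Fin (2 ^ s)) ℝ) :
    Matrix (Fin (2 ^ (s + 1))) (Fin (2 ^ (s + 1))) ℝ :=
  Matrix.reindex (finProdFinEquiv.trans (finCongr (by ring)))
    (finProdFinEquiv.trans (finCongr (by ring)))
    (Matrix.kroneckerMap (· * ·) M N)

/-- The n×n tridiagonal matrix with 2 on the diagonal and -1 on the off-diagonals. -/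
def Ae (n : ℕ) : Matrix (Fin n) (Fin n) ℝ :=
  Matrix.of fun i j =>
    if (i : ℕ) = j then 2 else if (i : ℕ) + 1 = j ∨ (j : ℕ) + 1 = i then -1 else 0

lemma pow_pos' (s : ℕ) : 0 < 2 ^ s := Nat.pow_pos (n := s) (by norm_num)
lemma div_lt2 (s : ℕ) (i : Fin (2 ^ (s + 1))) : (i : ℕ) / 2 ^ s < 2 := by
  have := i.isLt
  rw [Nat.div_lt_iff_lt_mul (pow_pos' s)]
  have : 2 ^ (s+1) = 2 * 2 ^ s := by ring
  omega
lemma mod_lt2 (s : ℕ) (i : ℕ) : i % 2 ^ s < 2 ^ s := Nat.mod_lt _ (pow_pos' s)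

lemma kronL_apply (s : ℕ) (M : Matrix (Fin 2) (Fin 2) ℝ)
    (N : Matrix (Fin (2 ^ s)) (Fin (2 ^ s)) ℝ) (i j : Fin (2 ^ (s + 1))) :
    kronL s M N i j = M ⟨(i : ℕ) / 2 ^ s, div_lt2 s i⟩ ⟨(j : ℕ) / 2 ^ s, div_lt2 s j⟩ *
      N ⟨(i : ℕ) % 2 ^ s, mod_lt2 s i⟩ ⟨(j : ℕ) % 2 ^ s, mod_lt2 s j⟩ := rfl

lemma fin_split (s : ℕ) (i : Fin (2 ^ (s + 1))) :
    ∃ a x : ℕ, a < 2 ∧ x < 2 ^ s ∧ (i : ℕ) = 2 ^ s * a + x ∧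
      (i : ℕ) / 2 ^ s = a ∧ (i : ℕ) % 2 ^ s = x :=
  ⟨(i : ℕ) / 2 ^ s, (i : ℕ) % 2 ^ s, div_lt2 s i, mod_lt2 s (i : ℕ),
    (Nat.div_add_mod (i : ℕ) (2 ^ s)).symm, rfl, rfl⟩

lemma kronN_sp_apply (s : ℕ) (i j : Fin (2 ^ s)) :
    kronN s (fun _ => σp) i j = if (i : ℕ) = 0 ∧ (j : ℕ) + 1 = 2 ^ s then 1 else 0 := by
  induction s with
  | zero =>
    have hi : (i : ℕ) = 0 := by omega
    have hj : (j : ℕ) = 0 := by omega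
    simp [kronN, Matrix.one_apply, Fin.ext_iff, hi, hj]
  | succ s ih =>
    have h : kronN (s + 1) (fun _ => σp) = kronL s σp (kronN s (fun _ => σp)) := rfl
    rw [h, kronL_apply, ih]
    have h2 : 2 ^ (s + 1) = 2 * 2 ^ s := by ring
    have hp := pow_pos' s
    obtain ⟨a, x, ha, hx, hiax, hdi, hmi⟩ := fin_split s i
    obtain ⟨b, y, hb, hy, hjby, hdj, hmj⟩ := fin_split s j
    simp only [hdi, hdj, hmi, hmj]
    interval_cases a <;> interval_cases b <;>
      simp only [σp, Fin.mk_zero, Fin.mk_one, Matrix.cons_val_zero,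
        Matrix.cons_val_one, Matrix.head_cons, Matrix.cons_val', Matrix.head_fin_const,
        Matrix.of_apply, Matrix.empty_val', Matrix.cons_val_fin_one] <;>
      split_ifs
    all_goals try norm_num
    all_goals exfalso
    all_goals omega

lemma kronN_sm_apply (s : ℕ) (i j : Fin (2 ^ s)) :
    kronN s (fun _ => σm) i j = if (j : ℕ) = 0 ∧ (i : ℕ) + 1 = 2 ^ s then 1 else 0 := by
  induction s with
  | zero =>
    have hi : (i : ℕ) = 0 := by omega
    have hj : (j : ℕ) = 0 := by omega
    simp [kronN, Matrix.one_apply, Fin.ext_iff, hi, hj]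
  | succ s ih =>
    have h : kronN (s + 1) (fun _ => σm) = kronL s σm (kronN s (fun _ => σm)) := rfl
    rw [h, kronL_apply, ih]
    have h2 : 2 ^ (s + 1) = 2 * 2 ^ s := by ring
    have hp := pow_pos' s
    obtain ⟨a, x, ha, hx, hiax, hdi, hmi⟩ := fin_split s i
    obtain ⟨b, y, hb, hy, hjby, hdj, hmj⟩ := fin_split s j
    simp only [hdi, hdj, hmi, hmj]
    interval_cases a <;> interval_cases b <;>
      simp only [σm, Fin.mk_zero, Fin.mk_one, Matrix.cons_val_zero,
        Matrix.cons_val_one, Matrix.head_cons, Matrix.cons_val', Matrix.head_fin_const,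
        Matrix.of_apply, Matrix.empty_val', Matrix.cons_val_fin_one] <;>
      split_ifs
    all_goals try norm_num
    all_goals exfalso
    all_goals omega

lemma Ae_rec (s : ℕ) :
    Ae (2 ^ (s + 1)) =
      kronL s 1 (Ae (2 ^ s)) +
      kronL s σm (-(kronN s fun _ => σp)) +
      kronL s σp (-(kronN s fun _ => σp))ᵀ := by
  ext i j
  simp only [Matrix.add_apply, kronL_apply, Matrix.transpose_apply, Matrix.neg_apply,
    kronN_sp_apply]
  have h2 : 2 ^ (s + 1) = 2 * 2 ^ s := by ring
  have hp := pow_pos' s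
  obtain ⟨a, x, ha, hx, hiax, hdi, hmi⟩ := fin_split s i
  obtain ⟨b, y, hb, hy, hjby, hdj, hmj⟩ := fin_split s j
  simp only [hdi, hdj, hmi, hmj]
  interval_cases a <;> interval_cases b <;>
    simp only [σm, σp, Ae, Matrix.of_apply, Matrix.one_apply, Fin.mk_zero, Fin.mk_one,
      Matrix.cons_val_zero, Matrix.cons_val_one, Matrix.head_cons, Matrix.cons_val',
      Matrix.head_fin_const, Matrix.empty_val', Matrix.cons_val_fin_one] <;>
    norm_num <;>
    split_ifs
  all_goals try norm_num
  all_goals exfalso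
  all_goals omega

lemma kronN_succ (s : ℕ) (M : Matrix (Fin 2) (Fin 2) ℝ) (τ : Fin s → Matrix (Fin 2) (Fin 2) ℝ) :
    kronN (s + 1) (Fin.cons M τ) = kronL s M (kronN s τ) := by
  rw [kronN, kronL]
  simp only [Fin.cons_zero, Fin.cons_succ]

lemma kronN_sp_transpose (s : ℕ) :
    (-(kronN s fun _ => σp))ᵀ = (-1 : ℝ) • kronN s (fun _ => σm) := by
  ext i j
  simp only [Matrix.transpose_apply, Matrix.neg_apply, Matrix.smul_apply,
    kronN_sp_apply, kronN_sm_apply, smul_eq_mul]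
  split_ifs <;> norm_num

lemma kronL_smul (s : ℕ) (a : ℝ) (M : Matrix (Fin 2) (Fin 2) ℝ)
    (N : Matrix (Fin (2 ^ s)) (Fin (2 ^ s)) ℝ) :
    kronL s M (a • N) = a • kronL s M N := by
  ext i j
  simp only [kronL_apply, Matrix.smul_apply, smul_eq_mul]
  ring

lemma kronL_sum (s : ℕ) (M : Matrix (Fin 2) (Fin 2) ℝ) {k : ℕ}
    (f : Fin k → Matrix (Fin (2 ^ s)) (Fin (2 ^ s)) ℝ) :
    kronL s M (∑ i, f i) = ∑ i, kronL s M (f i) := by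
  ext i j
  simp only [kronL_apply, Matrix.sum_apply, Finset.mul_sum]

lemma one_mem_SigmaBasis : (1 : Matrix (Fin 2) (Fin 2) ℝ) ∈ SigmaBasis := by
  simp [SigmaBasis]
lemma sp_mem_SigmaBasis : σp ∈ SigmaBasis := by simp [SigmaBasis]
lemma sm_mem_SigmaBasis : σm ∈ SigmaBasis := by simp [SigmaBasis]

lemma kronN_one_apply (τ : Fin 1 → Matrix (Fin 2) (Fin 2) ℝ) (i j : Fin (2 ^ 1)) :
    kronN 1 τ i j = τ 0 ⟨(i : ℕ), by omega⟩ ⟨(j : ℕ), by omega⟩ := by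
  have h : kronN 1 τ = kronL 0 (τ 0) (kronN 0 (fun k => τ k.succ)) := rfl
  rw [h, kronL_apply]
  have h1 : (kronN 0 fun k => τ k.succ) = 1 := rfl
  rw [h1]
  simp [Matrix.one_apply, Fin.ext_iff, Nat.mod_one]

lemma Ae_base_decomp :
    Ae (2 ^ 1) = ∑ i : Fin 3,
      (![(2 : ℝ), -1, -1]) i •
        kronN 1 ((![fun _ => 1, fun _ => σm, fun _ => σp]) i) := by
  ext i j
  rw [Fin.sum_univ_three]
  simp only [Matrix.add_apply, Matrix.smul_apply, kronN_one_apply, smul_eq_mul,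
    Matrix.cons_val_zero, Matrix.cons_val_one, Matrix.head_cons, Matrix.cons_val_two,
    Matrix.tail_cons]
  fin_cases i <;> fin_cases j <;>
    norm_num [Ae, σm, σp, Matrix.one_apply, Fin.ext_iff]

lemma decomp_step (n : ℕ)
    (α : Fin (2 * n + 1) → ℝ) (σ : Fin (2 * n + 1) → Fin n → Matrix (Fin 2) (Fin 2) ℝ)
    (hmem : ∀ i p, σ i p ∈ SigmaBasis)
    (hAe : Ae (2 ^ n) = ∑ i : Fin (2 * n + 1), α i • kronN n (σ i)) :
    ∃ (α' : Fin (2 * (n + 1) + 1) → ℝ)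
      (σ' : Fin (2 * (n + 1) + 1) → Fin (n + 1) → Matrix (Fin 2) (Fin 2) ℝ),
      (∀ i p, σ' i p ∈ SigmaBasis) ∧
      Ae (2 ^ (n + 1)) = ∑ i : Fin (2 * (n + 1) + 1), α' i • kronN (n + 1) (σ' i) := by
  have e : 2 * (n + 1) + 1 = (2 * n + 1) + 1 + 1 := by ring
  set α₀ : Fin ((2 * n + 1) + 1 + 1) → ℝ := Fin.snoc (Fin.snoc α (-1)) (-1) with hα₀
  set σ₀ : Fin ((2 * n + 1) + 1 + 1) → Fin (n + 1) → Matrix (Fin 2) (Fin 2) ℝ :=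
    Fin.snoc (Fin.snoc (fun i => Fin.cons 1 (σ i)) (Fin.cons σm fun _ => σp))
      (Fin.cons σp fun _ => σm) with hσ₀
  have hmem' : ∀ (k : Fin ((2 * n + 1) + 1 + 1)) (p : Fin (n + 1)), σ₀ k p ∈ SigmaBasis := by
    intro k p
    induction k using Fin.lastCases with
    | last =>
      simp only [hσ₀, Fin.snoc_last]
      induction p using Fin.cases with
      | zero => simpa using sp_mem_SigmaBasis
      | succ q => simpa using sm_mem_SigmaBasis
    | cast k =>
      simp only [hσ₀, Fin.snoc_castSucc]
      induction k using Fin.lastCases with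
      | last =>
        simp only [Fin.snoc_last]
        induction p using Fin.cases with
        | zero => simpa using sm_mem_SigmaBasis
        | succ q => simpa using sp_mem_SigmaBasis
      | cast k =>
        simp only [Fin.snoc_castSucc]
        induction p using Fin.cases with
        | zero => simpa using one_mem_SigmaBasis
        | succ q => simpa using hmem k q
  refine ⟨fun i => α₀ (Fin.cast e i), fun i => σ₀ (Fin.cast e i), fun i p => hmem' _ p, ?_⟩
  · have hsum : ∑ i : Fin (2 * (n + 1) + 1), α₀ (Fin.cast e i) • kronN (n + 1) (σ₀ (Fin.cast e i))
        = ∑ k : Fin ((2 * n + 1) + 1 + 1), α₀ k • kronN (n + 1) (σ₀ k) :=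
      Fintype.sum_equiv (finCongr e) _ _ (fun i => rfl)
    rw [hsum, Fin.sum_univ_castSucc, Fin.sum_univ_castSucc]
    simp only [hα₀, hσ₀, Fin.snoc_last, Fin.snoc_castSucc]
    rw [Ae_rec n, hAe, kronN_sp_transpose,
      show (-(kronN n fun _ => σp)) = (-1 : ℝ) • (kronN n fun _ => σp) by
        rw [neg_one_smul]]
    rw [kronL_smul, kronL_smul]
    have h1 : kronL n 1 (∑ i : Fin (2 * n + 1), α i • kronN n (σ i))
        = ∑ i : Fin (2 * n + 1), α i • kronN (n + 1) (Fin.cons 1 (σ i)) := by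
      rw [kronL_sum]
      refine Finset.sum_congr rfl fun i _ => ?_
      rw [kronL_smul, kronN_succ]
    rw [h1, kronN_succ, kronN_succ]

theorem poisson_matrix_sigma_decomposition :
    (∀ s : ℕ,
      Ae (2 ^ (s + 1)) =
        kronL s 1 (Ae (2 ^ s)) +
        kronL s σm (-(kronN s fun _ => σp)) +
        kronL s σp (-(kronN s fun _ => σp))ᵀ) ∧
    Ae (2 ^ 1) =
      Matrix.reindex (finCongr (by norm_num)) (finCongr (by norm_num))
        ((2 : ℝ) • (1 : Matrix (Fin 2) (Fin 2) ℝ) - σm - σp) ∧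
    (∀ s : ℕ, 1 ≤ s →
      ∃ (α : Fin (2 * s + 1) → ℝ) (σ : Fin (2 * s + 1) → Fin s → Matrix (Fin 2) (Fin 2) ℝ),
        (∀ i p, σ i p ∈ SigmaBasis) ∧
        Ae (2 ^ s) = ∑ i : Fin (2 * s + 1), α i • kronN s (σ i)) := by
  refine ⟨Ae_rec, ?_, ?_⟩
  · ext i j
    simp only [Matrix.reindex_apply, Matrix.submatrix_apply, Matrix.sub_apply,
      Matrix.smul_apply, smul_eq_mul]
    fin_cases i <;> fin_cases j <;>
      simp [Ae, σm, σp, Matrix.one_apply, Fin.ext_iff, Matrix.cons_val_one, Matrix.head_cons,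
        Matrix.cons_val_zero,
        show ((finCongr (by norm_num : 2 ^ 1 = 2)).symm) = Equiv.refl _ from rfl]
  · intro s
    induction s with
    | zero => omega
    | succ n ih =>
      intro _
      rcases Nat.eq_zero_or_pos n with rfl | hn
      · refine ⟨![(2 : ℝ), -1, -1], ![fun _ => 1, fun _ => σm, fun _ => σp], ?_, Ae_base_decomp⟩
        intro i p
        fin_cases i <;> simp [SigmaBasis]
      · obtain ⟨α, σ, hmem, hAe⟩ := ih hn
        exact decomp_step n α σ hmem hAe

end
end

section
/- For n = 2^t, the n×n lower bidiagonal matrix A₁ with 1 on the diagonal and -1 on the subdiagonal satisfies the recursion A₁^(t) = I₂ ⊗ A₁^(t-1) + σ₋ ⊗ D^(t-1), where D^(t-1) = -(σ₊)^{⊗(t-1)} and A₁^(1) = I₂ - σ₋; hence A₁ decomposes into log₂ n + 1 Sigma-basis Kronecker-product terms. -/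
open Matrix

noncomputable section
open scoped Classical

/-- The n×n lower bidiagonal matrix with 1 on the diagonal and -1 on the subdiagonal. -/
def A1 (n : ℕ) : Matrix (Fin n) (Fin n) ℝ :=
  Matrix.of fun i j =>
    if (i : ℕ) = j then 1 else if (j : ℕ) + 1 = i then -1 else 0


def E (s : ℕ) : Fin 2 × Fin (2^s) ≃ Fin (2^(s+1)) :=
  finProdFinEquiv.trans (finCongr (by ring))

lemma E_val (s : ℕ) (a : Fin 2) (r : Fin (2^s)) : ((E s (a, r)) : ℕ) = r + 2^s * a := by
  simp [E, finProdFinEquiv]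

lemma kronN_succ_s16 (n : ℕ) (σ : Fin (n+1) → Matrix (Fin 2) (Fin 2) ℝ) :
    kronN (n+1) σ = kronL n (σ 0) (kronN n (fun i => σ i.succ)) := rfl

lemma kronL_entry (s : ℕ) (M : Matrix (Fin 2) (Fin 2) ℝ)
    (N : Matrix (Fin (2 ^ s)) (Fin (2 ^ s)) ℝ) (a b : Fin 2) (r c : Fin (2^s)) :
    kronL s M N (E s (a, r)) (E s (b, c)) = M a b * N r c := by
  simp [kronL, E]

lemma topright (t : ℕ) (i j : Fin (2^t)) :
    kronN t (fun _ => σp) i j = if (i : ℕ) = 0 ∧ (j : ℕ) + 1 = 2^t then 1 else 0 := by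
  induction t with
  | zero =>
    fin_cases i <;> fin_cases j <;> simp [kronN]
  | succ s ih =>
    obtain ⟨⟨a, r⟩, rfl⟩ := (E s).surjective i
    obtain ⟨⟨b, c⟩, rfl⟩ := (E s).surjective j
    rw [kronN_succ_s16, kronL_entry, ih]
    have hr := r.is_lt
    have hc := c.is_lt
    have hn : 0 < 2^s := Nat.two_pow_pos s
    have h2 : (2:ℕ)^(s+1) = 2 * 2^s := by ring
    fin_cases a <;> fin_cases b <;>
      simp [σp, E_val, h2, -Fin.val_eq_zero_iff] <;> (try split_ifs) <;> first | rfl | omega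

lemma part1 (t : ℕ) :
    A1 (2 ^ (t + 1)) =
      kronL t 1 (A1 (2 ^ t)) + kronL t σm (-(kronN t fun _ => σp)) := by
  ext i j
  obtain ⟨⟨a, r⟩, rfl⟩ := (E t).surjective i
  obtain ⟨⟨b, c⟩, rfl⟩ := (E t).surjective j
  rw [Matrix.add_apply, kronL_entry, kronL_entry, Matrix.neg_apply, topright]
  have hr := r.is_lt
  have hc := c.is_lt
  have hn : 0 < 2^t := Nat.two_pow_pos t
  have h2 : (2:ℕ)^(t+1) = 2 * 2^t := by ring
  fin_cases a <;> fin_cases b <;>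
    simp [σm, A1, E_val, Matrix.one_apply, h2, -Fin.val_eq_zero_iff] <;>
      split_ifs <;> first | rfl | omega | norm_num

lemma part2 : A1 (2 ^ 1) =
    Matrix.reindex (finCongr (by norm_num)) (finCongr (by norm_num))
      ((1 : Matrix (Fin 2) (Fin 2) ℝ) - σm) := by
  ext i j
  fin_cases i <;> fin_cases j <;>
    simp [A1, σm, Matrix.one_apply]

def kronLlin (s : ℕ) (M : Matrix (Fin 2) (Fin 2) ℝ) :
    Matrix (Fin (2^s)) (Fin (2^s)) ℝ →ₗ[ℝ] Matrix (Fin (2^(s+1))) (Fin (2^(s+1))) ℝ where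
  toFun := kronL s M
  map_add' N P := by
    ext i j
    obtain ⟨⟨a, r⟩, rfl⟩ := (E s).surjective i
    obtain ⟨⟨b, c⟩, rfl⟩ := (E s).surjective j
    show kronL s M (N + P) (E s (a,r)) (E s (b,c)) = _
    rw [kronL_entry, Matrix.add_apply, Matrix.add_apply, kronL_entry, kronL_entry]
    ring
  map_smul' x N := by
    ext i j
    obtain ⟨⟨a, r⟩, rfl⟩ := (E s).surjective i
    obtain ⟨⟨b, c⟩, rfl⟩ := (E s).surjective j
    show kronL s M (x • N) (E s (a,r)) (E s (b,c)) = _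
    rw [kronL_entry, Matrix.smul_apply]
    show _ = (x • kronL s M N) (E s (a,r)) (E s (b,c))
    rw [Matrix.smul_apply, kronL_entry]
    simp [smul_eq_mul]; ring

lemma kronN_cons (t : ℕ) (M : Matrix (Fin 2) (Fin 2) ℝ) (f : Fin t → Matrix (Fin 2) (Fin 2) ℝ) :
    kronN (t+1) (Fin.cons M f) = kronL t M (kronN t f) := by
  rw [kronN_succ_s16]
  simp [Fin.cons_zero, Fin.cons_succ]

lemma part3 (t : ℕ) :
    ∃ (α : Fin (t + 1) → ℝ) (σ : Fin (t + 1) → Fin t → Matrix (Fin 2) (Fin 2) ℝ),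
      (∀ i p, σ i p ∈ SigmaBasis) ∧
      A1 (2 ^ t) = ∑ i : Fin (t + 1), α i • kronN t (σ i) := by
  induction t with
  | zero =>
    refine ⟨fun _ => 1, fun _ => Fin.elim0, fun i p => p.elim0, ?_⟩
    ext i j
    fin_cases i <;> fin_cases j <;> simp [A1, kronN, Matrix.one_apply]
  | succ t ih =>
    obtain ⟨α, σ, hmem, hA⟩ := ih
    refine ⟨Fin.snoc α (-1), Fin.snoc (fun i => Fin.cons 1 (σ i)) (Fin.cons σm fun _ => σp),
      ?_, ?_⟩
    · intro i p
      refine Fin.lastCases ?_ ?_ i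
      · simp only [Fin.snoc_last]
        refine Fin.cases ?_ ?_ p
        · simp [SigmaBasis]
        · intro q; simp [SigmaBasis]
      · intro k
        simp only [Fin.snoc_castSucc]
        refine Fin.cases ?_ ?_ p
        · simp [SigmaBasis]
        · intro q; simp only [Fin.cons_succ]; exact hmem k q
    · rw [part1 t, hA]
      have h1 : kronL t 1 (∑ i : Fin (t+1), α i • kronN t (σ i))
          = ∑ i : Fin (t+1), α i • kronN (t+1) (Fin.cons 1 (σ i)) := by
        show kronLlin t 1 _ = _
        rw [map_sum]
        congr 1; funext i
        rw [_root_.map_smul]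
        show α i • kronL t 1 (kronN t (σ i)) = _
        rw [kronN_cons]
      have h2 : kronL t σm (-(kronN t fun _ => σp))
          = (-1 : ℝ) • kronN (t+1) (Fin.cons σm fun _ => σp) := by
        show kronLlin t σm _ = _
        rw [map_neg, kronN_cons]
        show _ = (-1 : ℝ) • kronLlin t σm (kronN t fun _ => σp)
        rw [neg_one_smul]
      rw [h1, h2]
      conv_rhs => rw [Fin.sum_univ_castSucc]
      simp [Fin.snoc_last, Fin.snoc_castSucc]

theorem bidiagonal_matrix_sigma_decomposition :
    (∀ t : ℕ,
      A1 (2 ^ (t + 1)) =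
        kronL t 1 (A1 (2 ^ t)) + kronL t σm (-(kronN t fun _ => σp))) ∧
    A1 (2 ^ 1) =
      Matrix.reindex (finCongr (by norm_num)) (finCongr (by norm_num))
        ((1 : Matrix (Fin 2) (Fin 2) ℝ) - σm) ∧
    (∀ t : ℕ, 1 ≤ t →
      ∃ (α : Fin (t + 1) → ℝ) (σ : Fin (t + 1) → Fin t → Matrix (Fin 2) (Fin 2) ℝ),
        (∀ i p, σ i p ∈ SigmaBasis) ∧
        A1 (2 ^ t) = ∑ i : Fin (t + 1), α i • kronN t (σ i)) := by
  exact ⟨part1, part2, fun t _ => part3 t⟩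

end
end
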